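/- Bias identity: with Φ ∈ R^{t×d}, λ > 0, Σ = ΦΦᵀ + λI_t, and for φ ∈ R^d with k = Φφ, define δ = ΦᵀΣ^{-1}k − φ. Then ||δ||² = (φᵀφ − kᵀΣ^{-1}k) − λ kᵀΣ^{-2}k. In particular ||δ||² ≤ φᵀφ − kᵀΣ^{-1}k. -/

import Mathlib

/-! With `u := Σ⁻¹ k`, the normal equation `ΦΦᵀ u = k - λ u` turns `‖Φᵀ u‖²` into `k ⬝ᵥ u - λ ‖u‖²`
and `φ ⬝ᵥ Φᵀ u` into `k ⬝ᵥ u`; expanding `‖Φᵀ u - φ‖²` gives the identity, and the subtracted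
term `λ ‖u‖² = λ kᵀ Σ⁻² k` is nonnegative. -/

open Matrix

namespace Matrix

variable {m n R : Type*} [Fintype m] [Fintype n]

theorem transpose_mulVec_dotProduct_transpose_mulVec [CommSemiring R] (A : Matrix m n R)
    (u : m → R) : Aᵀ *ᵥ u ⬝ᵥ Aᵀ *ᵥ u = u ⬝ᵥ (A * Aᵀ) *ᵥ u := by
  rw [dotProduct_mulVec, vecMul_transpose, mulVec_mulVec, dotProduct_comm]

theorem dotProduct_mul_self_mulVec_of_transpose_eq [CommSemiring R] {A : Matrix m m R}
    (hA : Aᵀ = A) (v : m → R) : v ⬝ᵥ (A * A) *ᵥ v = A *ᵥ v ⬝ᵥ A *ᵥ v := by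
  nth_rewrite 2 [← hA]
  rw [← transpose_mulVec_dotProduct_transpose_mulVec, hA]

theorem ridge_residual_dotProduct_self [CommRing R] [DecidableEq m] (Φ : Matrix m n R) (lam : R)
    (φ : n → R) {u : m → R} (hu : (Φ * Φᵀ + lam • 1) *ᵥ u = Φ *ᵥ φ) :
    (Φᵀ *ᵥ u - φ) ⬝ᵥ (Φᵀ *ᵥ u - φ) = φ ⬝ᵥ φ - Φ *ᵥ φ ⬝ᵥ u - lam * (u ⬝ᵥ u) := by
  have hnormal : (Φ * Φᵀ) *ᵥ u = Φ *ᵥ φ - lam • u := by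
    rw [← hu, add_mulVec, smul_mulVec, one_mulVec, add_sub_cancel_right]
  have hcross : φ ⬝ᵥ Φᵀ *ᵥ u = Φ *ᵥ φ ⬝ᵥ u := by
    rw [dotProduct_mulVec, vecMul_transpose]
  rw [sub_dotProduct, dotProduct_sub, dotProduct_sub, transpose_mulVec_dotProduct_transpose_mulVec,
    hnormal, dotProduct_comm (Φᵀ *ᵥ u) φ, hcross, dotProduct_sub, dotProduct_smul, smul_eq_mul,
    dotProduct_comm u]
  ring

theorem posDef_mul_transpose_add_smul_one [DecidableEq m] (Φ : Matrix m n ℝ) {lam : ℝ}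
    (hlam : 0 < lam) : (Φ * Φᵀ + lam • 1).PosDef := by
  simpa using PosDef.posSemidef_add (posSemidef_self_mul_conjTranspose Φ) (PosDef.one.smul hlam)

end Matrix

theorem stmt15 {t d : ℕ} (Φ : Matrix (Fin t) (Fin d) ℝ) (lam : ℝ) (hlam : 0 < lam)
    (φ : Fin d → ℝ) :
    let Sig : Matrix (Fin t) (Fin t) ℝ := Φ * Φᵀ + lam • 1
    let k : Fin t → ℝ := Φ.mulVec φ
    let δ : Fin d → ℝ := Φᵀ.mulVec (Sig⁻¹.mulVec k) - φ
    (δ ⬝ᵥ δ = (φ ⬝ᵥ φ - k ⬝ᵥ Sig⁻¹.mulVec k) - lam * (k ⬝ᵥ (Sig⁻¹ * Sig⁻¹).mulVec k)) ∧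
    δ ⬝ᵥ δ ≤ φ ⬝ᵥ φ - k ⬝ᵥ Sig⁻¹.mulVec k := by
  intro Sig k δ
  have hpd : Sig.PosDef := posDef_mul_transpose_add_smul_one Φ hlam
  have hsolve : Sig *ᵥ (Sig⁻¹ *ᵥ k) = k := by
    rw [mulVec_mulVec, mul_nonsing_inv _ ((isUnit_iff_isUnit_det _).mp hpd.isUnit), one_mulVec]
  have hinv_symm : Sig⁻¹ᵀ = Sig⁻¹ := by
    rw [transpose_nonsing_inv, ← conjTranspose_eq_transpose_of_trivial, hpd.isHermitian.eq]
  have hidentity : δ ⬝ᵥ δ = (φ ⬝ᵥ φ - k ⬝ᵥ Sig⁻¹ *ᵥ k) - lam * (k ⬝ᵥ (Sig⁻¹ * Sig⁻¹) *ᵥ k) := by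
    rw [dotProduct_mul_self_mulVec_of_transpose_eq hinv_symm]
    exact ridge_residual_dotProduct_self Φ lam φ hsolve
  have hbias_nonneg : 0 ≤ lam * (k ⬝ᵥ (Sig⁻¹ * Sig⁻¹) *ᵥ k) := by
    rw [dotProduct_mul_self_mulVec_of_transpose_eq hinv_symm]
    exact mul_nonneg hlam.le (dotProduct_self_star_nonneg _)
  exact ⟨hidentity, by linarith⟩
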